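/- Let A = {a,b,c,d} and let R be the 4-agent profile with ≿_1: {a,c} ≻ {b,d}; ≿_2: {b,d} ≻ {a,c}; ≿_3: {a,d} ≻ b ≻ c; ≿_4: {b,c} ≻ a ≻ d. Then the lottery (1/2)a + (1/2)b is SD-efficient at R. -/

import Mathlib

open Classical

noncomputable section

variable {A : Type*} [Fintype A]

/-- A (weak) preference relation: complete and transitive. -/
def IsPref (r : A → A → Prop) : Prop :=
  (∀ x y, r x y ∨ r y x) ∧ ∀ x y z, r x y → r y z → r x z

/-- A lottery over the alternatives. -/
def Lottery (A : Type*) [Fintype A] :=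
  {p : A → ℝ // (∀ x, 0 ≤ p x) ∧ ∑ x, p x = 1}

/-- Probability that lottery `p` yields an alternative at least as good as `x` w.r.t. `r`. -/
def upperSum (r : A → A → Prop) (p : Lottery A) (x : A) : ℝ :=
  ∑ y, if r y x then p.1 y else 0

/-- `p` (weakly) stochastically dominates `q` w.r.t. the preference relation `r`. -/
def SDGe (r : A → A → Prop) (p q : Lottery A) : Prop :=
  ∀ x, upperSum r q x ≤ upperSum r p x

/-- Strict stochastic dominance. -/
def SDGt (r : A → A → Prop) (p q : Lottery A) : Prop :=
  SDGe r p q ∧ ¬ SDGe r q p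

/-- A profile assigning a preference relation to each of `n` agents; validity. -/
def ValidProfile {n : ℕ} (R : Fin n → A → A → Prop) : Prop :=
  ∀ i, IsPref (R i)

/-- `p` is SD-efficient at profile `R`. -/
def SDEfficientAt {n : ℕ} (R : Fin n → A → A → Prop) (p : Lottery A) : Prop :=
  ¬ ∃ q : Lottery A, (∀ i, SDGe (R i) q p) ∧ ∃ i, SDGt (R i) q p

def Anonymous {n : ℕ} (f : (Fin n → A → A → Prop) → Lottery A) : Prop :=
  ∀ R : Fin n → A → A → Prop, ValidProfile R →
    ∀ σ : Equiv.Perm (Fin n), f (R ∘ σ) = f R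

/-- Relabel a preference relation by a permutation of the alternatives. -/
def relabel (π : Equiv.Perm A) (r : A → A → Prop) : A → A → Prop :=
  fun x y => r (π.symm x) (π.symm y)

def relabelProfile {n : ℕ} (π : Equiv.Perm A) (R : Fin n → A → A → Prop) :
    Fin n → A → A → Prop :=
  fun i => relabel π (R i)

def Neutral {n : ℕ} (f : (Fin n → A → A → Prop) → Lottery A) : Prop :=
  ∀ R : Fin n → A → A → Prop, ValidProfile R →
    ∀ (π : Equiv.Perm A) (x : A), (f (relabelProfile π R)).1 (π x) = (f R).1 x

def Efficient {n : ℕ} (f : (Fin n → A → A → Prop) → Lottery A) : Prop :=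
  ∀ R : Fin n → A → A → Prop, ValidProfile R → SDEfficientAt R (f R)

def Strategyproof {n : ℕ} (f : (Fin n → A → A → Prop) → Lottery A) : Prop :=
  ¬ ∃ (R : Fin n → A → A → Prop) (i : Fin n) (r : A → A → Prop),
      ValidProfile R ∧ IsPref r ∧ SDGt (R i) (f (Function.update R i r)) (f R)


/-- The preference relation induced by a rank function (lower rank = better). -/
def prefOfRank (ρ : Fin 4 → ℕ) : Fin 4 → Fin 4 → Prop := fun x y => ρ x ≤ ρ y

/-- The profile `R` from Example 1: with `a = 0`, `b = 1`, `c = 2`, `d = 3`;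
`≿₁: {a,c},{b,d}`, `≿₂: {b,d},{a,c}`, `≿₃: {a,d},b,c`, `≿₄: {b,c},a,d`. -/
def Rex : Fin 4 → Fin 4 → Fin 4 → Prop :=
  ![prefOfRank ![0, 1, 0, 1], prefOfRank ![1, 0, 1, 0],
    prefOfRank ![0, 1, 2, 0], prefOfRank ![1, 0, 0, 2]]

/-- The lottery `1/2 a + 1/2 b`. -/
def pHalfAB : Lottery (Fin 4) :=
  ⟨![1/2, 1/2, 0, 0], by
    refine ⟨fun x => ?_, ?_⟩
    · fin_cases x <;> norm_num
    · first
        | (rw [Fin.sum_univ_four]; show (1/2:ℝ) + 1/2 + 0 + 0 = 1; norm_num)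
        | (simp [Fin.sum_univ_four, Matrix.cons_val]; norm_num)⟩

/-! For agents 3 and 4 the lottery `1/2 a + 1/2 b` already puts full mass on the upper sets
`{a, b, d}` and `{a, b, c}`, so any `q` weakly SD-dominating it for them gives no mass to `c` or
`d`; their top sets `{a, d}` and `{b, c}` then force `q a ≥ 1/2` and `q b ≥ 1/2`. Hence the only
lottery weakly dominating `1/2 a + 1/2 b` for everybody is itself, which cannot dominate strictly.
-/

theorem Lottery.ext {p q : Lottery A} (h : ∀ x, p.1 x = q.1 x) : p = q :=
  Subtype.ext (funext h)

theorem SDGe.refl (r : A → A → Prop) (p : Lottery A) : SDGe r p p :=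
  fun _ => le_rfl

theorem SDEfficientAt.of_forall_SDGe_imp_eq {n : ℕ} {R : Fin n → A → A → Prop}
    {p : Lottery A} (h : ∀ q : Lottery A, (∀ i, SDGe (R i) q p) → q = p) : SDEfficientAt R p := by
  rintro ⟨q, hge, _, -, hnot⟩
  exact hnot (h q hge ▸ SDGe.refl _ _)

theorem eq_pHalfAB_of_forall_SDGe_Rex (q : Lottery (Fin 4))
    (hq : ∀ i, SDGe (Rex i) q pHalfAB) : q = pHalfAB := by
  have h3_top : 1 / 2 ≤ q.1 0 + q.1 3 := by
    simpa [upperSum, Rex, pHalfAB, prefOfRank, Fin.sum_univ_four] using hq 2 0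
  have h3_b : 1 ≤ q.1 0 + q.1 1 + q.1 3 := by
    have h := hq 2 1
    simp [upperSum, Rex, pHalfAB, prefOfRank, Fin.sum_univ_four] at h
    linarith
  have h4_top : 1 / 2 ≤ q.1 1 + q.1 2 := by
    simpa [upperSum, Rex, pHalfAB, prefOfRank, Fin.sum_univ_four] using hq 3 1
  have h4_a : 1 ≤ q.1 0 + q.1 1 + q.1 2 := by
    have h := hq 3 0
    simp [upperSum, Rex, pHalfAB, prefOfRank, Fin.sum_univ_four] at h
    linarith
  have hsum : q.1 0 + q.1 1 + q.1 2 + q.1 3 = 1 := by simpa only [Fin.sum_univ_four] using q.2.2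
  have hc : q.1 2 = 0 := by linarith [q.2.1 2]
  have hd : q.1 3 = 0 := by linarith [q.2.1 3]
  have ha : q.1 0 = 1 / 2 := by linarith
  have hb : q.1 1 = 1 / 2 := by linarith
  refine Lottery.ext fun x => ?_
  fin_cases x <;> simp [pHalfAB, ha, hb, hc, hd]

theorem half_a_half_b_sd_efficient : SDEfficientAt Rex pHalfAB :=
  SDEfficientAt.of_forall_SDGe_imp_eq eq_pHalfAB_of_forall_SDGe_Rex

end
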